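/- arXiv:2402.05274 — 4 statements merged into one kernel-verified Lean document; each statement's English description precedes it below -/
import Mathlib

section
/- Let (J_k)_{k≥0} be a nondecreasing real sequence with J_0 < J_* and J_k ≤ J_* for all k, let z < J_0, and let (V_k(s))_{k≥0} be reals satisfying V_{k+1}(s) ≥ V_k(s)·(J_{k+1} − z)/(J_k − z) + τ·(J_{k+1} − J_k)·(c − z)/(J_k − z) for constants τ ≥ 0 and c ≥ J_*, where V_0(s) ≤ 0. Then for all k, V_k(s) ≥ V_0(s)·(J_* − z)/(J_0 − z) − τ·(J_* − J_0)(c − z)(J_* − z)/(J_0 − z)^2. -/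
/-!
Writing `a = τ (c - z)`, the recursion says exactly `V (k+1) - a ≥ (V k - a) (J (k+1) - z) / (J k - z)`,
so `(V k - a) / (J k - z)` is nondecreasing. Comparing with `k = 0` gives
`V k ≥ V 0 (J k - z) / (J 0 - z) - a (J k - J 0) / (J 0 - z)`, and both terms are then
worst at `J k = J*` because `V 0 ≤ 0` and `J* - z ≥ J 0 - z > 0`.
-/

lemma monotone_div_of_mul_div_le {W d : ℕ → ℝ} (hd : ∀ k, 0 < d k)
    (h : ∀ k, W k * d (k + 1) / d k ≤ W (k + 1)) : Monotone fun k => W k / d k := by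
  refine monotone_nat_of_le_succ fun k => ?_
  rw [le_div_iff₀ (hd (k + 1))]
  calc W k / d k * d (k + 1) = W k * d (k + 1) / d k := div_mul_eq_mul_div _ _ _
    _ ≤ W (k + 1) := h k

lemma mul_div_sub_shift_eq (v a x y : ℝ) (hy : y ≠ 0) :
    v * x / y - a * (x - y) / y = (v - a) * x / y + a := by
  field_simp
  ring

lemma mul_div_sub_le_of_sub_div_le {v₀ v a x₀ x x' : ℝ} (hx₀ : 0 < x₀) (hx₀x : x₀ ≤ x)
    (hxx' : x ≤ x') (hv₀ : v₀ ≤ 0) (ha : 0 ≤ a) (h : (v₀ - a) / x₀ ≤ (v - a) / x) :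
    v₀ * x' / x₀ - a * (x' - x₀) * x' / x₀ ^ 2 ≤ v := by
  have hv₀x : v₀ * x' / x₀ ≤ v₀ * x / x₀ := by
    gcongr ?_ / _
    exact mul_le_mul_of_nonpos_left hxx' hv₀
  have hdrift : a * (x - x₀) / x₀ ≤ a * (x' - x₀) * x' / x₀ ^ 2 :=
    calc a * (x - x₀) / x₀ ≤ a * (x' - x₀) / x₀ := by gcongr
      _ ≤ a * (x' - x₀) / x₀ * (x' / x₀) :=
          le_mul_of_one_le_right (by have := hx₀x.trans hxx'; positivity)
            ((one_le_div hx₀).2 (hx₀x.trans hxx'))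
      _ = a * (x' - x₀) * x' / x₀ ^ 2 := by field_simp
  calc v₀ * x' / x₀ - a * (x' - x₀) * x' / x₀ ^ 2 ≤ v₀ * x / x₀ - a * (x - x₀) / x₀ := by
        linarith
    _ = a + (v₀ - a) / x₀ * x := by field_simp; ring
    _ ≤ v := by linarith [(le_div_iff₀ (hx₀.trans_le hx₀x)).mp h]

theorem telescoping_relative_value_bound_general
    (J : ℕ → ℝ) (Jstar z τ c : ℝ) (V : ℕ → ℝ)
    (hmono : Monotone J) (hle : ∀ k, J k ≤ Jstar)
    (hz : z < J 0) (hτ : 0 ≤ τ) (hc : Jstar ≤ c) (hV0 : V 0 ≤ 0)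
    (hrec : ∀ k, V (k + 1) ≥ V k * (J (k + 1) - z) / (J k - z)
      - τ * (J (k + 1) - J k) * (c - z) / (J k - z)) :
    ∀ k, V k ≥ V 0 * (Jstar - z) / (J 0 - z)
      - τ * (Jstar - J 0) * (c - z) * (Jstar - z) / (J 0 - z) ^ 2 := by
  intro k
  set a := τ * (c - z)
  have hd : ∀ k, 0 < J k - z := fun k => by linarith [hmono (Nat.zero_le k)]
  have hshift : ∀ k, (V k - a) * (J (k + 1) - z) / (J k - z) ≤ V (k + 1) - a := fun k => by
    have := hrec k
    rw [show τ * (J (k + 1) - J k) * (c - z) = a * ((J (k + 1) - z) - (J k - z)) by ring,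
      mul_div_sub_shift_eq _ _ _ _ (hd k).ne'] at this
    linarith
  have hk : (V 0 - a) / (J 0 - z) ≤ (V k - a) / (J k - z) :=
    monotone_div_of_mul_div_le hd hshift (Nat.zero_le k)
  have hJstar : Jstar - J 0 = (Jstar - z) - (J 0 - z) := by ring
  rw [ge_iff_le, mul_right_comm τ, hJstar]
  exact mul_div_sub_le_of_sub_div_le (hd 0) (by linarith [hmono (Nat.zero_le k)])
    (by linarith [hle k]) hV0 (mul_nonneg hτ (by linarith [hle 0])) hk

theorem telescoping_relative_value_bound
    (J : ℕ → ℝ) (Jstar z τ c : ℝ) (V : ℕ → ℝ)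
    (hmono : Monotone J) (h0star : J 0 < Jstar) (hle : ∀ k, J k ≤ Jstar)
    (hz : z < J 0) (hτ : 0 ≤ τ) (hc : Jstar ≤ c) (hV0 : V 0 ≤ 0)
    (hrec : ∀ k, V (k + 1) ≥ V k * (J (k + 1) - z) / (J k - z)
      - τ * (J (k + 1) - J k) * (c - z) / (J k - z)) :
    ∀ k, V k ≥ V 0 * (Jstar - z) / (J 0 - z)
      - τ * (Jstar - J 0) * (c - z) * (Jstar - z) / (J 0 - z) ^ 2 :=
  telescoping_relative_value_bound_general J Jstar z τ c V hmono hle hz hτ hc hV0 hrec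
end

section
/- For any positive reals q and n', any real α ≥ 1, setting R₄ = n'·α·(2αn' + n')^{α−1}, we have (q + n')^α ≤ 2·q^α + R₄. -/
open Real

-- Tangent-line (Bernoulli) bound: (y+d)^α ≤ y^α + α d (y+d)^(α-1)
lemma tangent_rpow_bound (y d α : ℝ) (hy : 0 < y) (hd : 0 ≤ d) (hα : 1 ≤ α) :
    (y + d) ^ α ≤ y ^ α + α * d * (y + d) ^ (α - 1) := by
  set s : ℝ := y + d with hs
  have hspos : 0 < s := by positivity
  have hz : -1 ≤ -(d / s) := by
    rw [neg_le_neg_iff]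
    exact div_le_one_of_le₀ (by linarith) hspos.le
  have hber := one_add_mul_self_le_rpow_one_add hz hα
  have h1 : (1 : ℝ) + -(d / s) = y / s := by field_simp; rw [hs]; ring
  rw [h1] at hber
  have hdiv : (y / s) ^ α = y ^ α / s ^ α := Real.div_rpow hy.le hspos.le α
  rw [hdiv] at hber
  have hsα : 0 < s ^ α := Real.rpow_pos_of_pos hspos α
  have hmul := mul_le_mul_of_nonneg_right hber hsα.le
  have hys : y ^ α / s ^ α * s ^ α = y ^ α := div_mul_cancel₀ _ (ne_of_gt hsα)
  rw [hys] at hmul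
  have hsm1 : s ^ (α - 1) = s ^ α / s := by
    rw [Real.rpow_sub hspos, Real.rpow_one]
  have hkey : (1 + α * -(d / s)) * s ^ α = s ^ α - α * d * s ^ (α - 1) := by
    rw [hsm1]; field_simp; ring
  rw [hkey] at hmul
  linarith

lemma aux_two_bound (α : ℝ) (hα : 1 ≤ α) : (1 + 1 / (2 * α)) ^ (α - 1) ≤ 2 := by
  have hαpos : (0 : ℝ) < α := by linarith
  have hb : (1 : ℝ) ≤ 1 + 1 / (2 * α) := by
    have : (0:ℝ) < 1 / (2 * α) := by positivity
    linarith
  have h1 : (1 + 1 / (2 * α)) ^ (α - 1) ≤ (1 + 1 / (2 * α)) ^ α :=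
    Real.rpow_le_rpow_of_exponent_le hb (by linarith)
  have h2 : (1 + 1 / (2 * α)) ^ α = Real.exp (α * Real.log (1 + 1 / (2 * α))) := by
    rw [Real.rpow_def_of_pos (by linarith), mul_comm]
  have hlog : Real.log (1 + 1 / (2 * α)) ≤ 1 / (2 * α) :=
    le_trans (Real.log_le_sub_one_of_pos (by linarith)) (by linarith)
  have h3 : α * Real.log (1 + 1 / (2 * α)) ≤ 1 / 2 := by
    calc α * Real.log (1 + 1 / (2 * α)) ≤ α * (1 / (2 * α)) :=
          mul_le_mul_of_nonneg_left hlog hαpos.le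
      _ = 1 / 2 := by field_simp
  have h4 : Real.exp (α * Real.log (1 + 1 / (2 * α))) ≤ Real.exp (1 / 2) :=
    Real.exp_le_exp.mpr h3
  have h5 : Real.exp (1 / 2) ≤ 2 := by
    nlinarith [Real.exp_one_lt_d9, Real.exp_pos (1/2 : ℝ),
      Real.exp_add (1/2 : ℝ) (1/2 : ℝ), Real.exp_one_gt_d9]
  linarith [h1, h2 ▸ le_trans h4 h5]

theorem alpha_moment_reward_growth
    (q n' α : ℝ) (hq : 0 < q) (hn : 0 < n') (hα : 1 ≤ α) :
    (q + n') ^ α ≤ 2 * q ^ α + n' * α * (2 * α * n' + n') ^ (α - 1) := by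
  have hαpos : (0 : ℝ) < α := by linarith
  have htan := tangent_rpow_bound q n' α hq hn.le hα
  have hqα : 0 < q ^ α := Real.rpow_pos_of_pos hq α
  rcases le_or_gt q (2 * α * n') with hcase | hcase
  · -- small q: (q+n')^(α-1) ≤ (2αn'+n')^(α-1)
    have hmono : (q + n') ^ (α - 1) ≤ (2 * α * n' + n') ^ (α - 1) :=
      Real.rpow_le_rpow (by positivity) (by linarith) (by linarith)
    have : α * n' * (q + n') ^ (α - 1) ≤ α * n' * (2 * α * n' + n') ^ (α - 1) :=
      mul_le_mul_of_nonneg_left hmono (by positivity)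
    nlinarith
  · -- large q: α n' (q+n')^(α-1) ≤ q^α
    have hb : (0:ℝ) < 1 + 1 / (2 * α) := by positivity
    have hle : q + n' ≤ q * (1 + 1 / (2 * α)) := by
      rw [mul_add, mul_one]
      have : n' ≤ q * (1 / (2 * α)) := by
        rw [mul_one_div, le_div_iff₀ (by positivity : (0:ℝ) < 2 * α)]
        nlinarith
      linarith
    have hmono : (q + n') ^ (α - 1) ≤ (q * (1 + 1 / (2 * α))) ^ (α - 1) :=
      Real.rpow_le_rpow (by positivity) hle (by linarith)
    have hsplit : (q * (1 + 1 / (2 * α))) ^ (α - 1)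
        = q ^ (α - 1) * (1 + 1 / (2 * α)) ^ (α - 1) :=
      Real.mul_rpow hq.le hb.le
    have h2 := aux_two_bound α hα
    have hq1pos : 0 < q ^ (α - 1) := Real.rpow_pos_of_pos hq _
    have hkey : α * n' * (q + n') ^ (α - 1) ≤ q ^ α := by
      have hqα' : q ^ α = q ^ (α - 1) * q := by
        rw [← Real.rpow_add_one (ne_of_gt hq) (α - 1)]; ring_nf
      calc α * n' * (q + n') ^ (α - 1)
          ≤ α * n' * (q ^ (α - 1) * (1 + 1 / (2 * α)) ^ (α - 1)) := by
            rw [hsplit] at hmono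
            exact mul_le_mul_of_nonneg_left hmono (by positivity)
        _ ≤ α * n' * (q ^ (α - 1) * 2) := by
            have := mul_le_mul_of_nonneg_left h2 hq1pos.le
            exact mul_le_mul_of_nonneg_left this (by positivity)
        _ = (2 * α * n') * q ^ (α - 1) := by ring
        _ ≤ q * q ^ (α - 1) := mul_le_mul_of_nonneg_right hcase.le hq1pos.le
        _ = q ^ α := by rw [hqα']; ring
    have hRpos : 0 ≤ n' * α * (2 * α * n' + n') ^ (α - 1) := by positivity
    linarith
end

section
/- For reals q ≥ 2n'α with n' > 0, α ≥ 1: q^α ≥ n'·α·(q + n')^{α−1}. -/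
/-!
Writing `q + n' = q (1 + n'/q)` and using `1 + x ≤ eˣ`, the factor `(q + n')^(α-1)` is at most
`e^(n'(α-1)/q) q^(α-1)`. For `q ≥ 2n'α` the exponent is at most `1/2` and `e^(1/2) ≤ 2`, so the
right-hand side is at most `2n'α q^(α-1) ≤ q · q^(α-1) = q^α`.
-/

open Real

lemma one_add_rpow_le_exp_mul {x β : ℝ} (hx : -1 ≤ x) (hβ : 0 ≤ β) :
    (1 + x) ^ β ≤ exp (x * β) :=
  calc (1 + x) ^ β ≤ exp x ^ β :=
        rpow_le_rpow (by linarith) (by linarith [add_one_le_exp x]) hβ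
    _ = exp (x * β) := (exp_mul x β).symm

lemma add_rpow_le_exp_mul_rpow {q t β : ℝ} (hq : 0 < q) (ht : -q ≤ t) (hβ : 0 ≤ β) :
    (q + t) ^ β ≤ exp (t / q * β) * q ^ β := by
  have hx : -1 ≤ t / q := by rwa [le_div_iff₀ hq, neg_one_mul]
  calc (q + t) ^ β = q ^ β * (1 + t / q) ^ β := by
        rw [← mul_rpow hq.le (by linarith), mul_add, mul_one, mul_div_cancel₀ _ hq.ne']
    _ ≤ q ^ β * exp (t / q * β) := by gcongr; exact one_add_rpow_le_exp_mul hx hβ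
    _ = exp (t / q * β) * q ^ β := mul_comm _ _

lemma exp_one_half_le_two : exp (1 / 2) ≤ 2 :=
  (le_log_iff_exp_le two_pos).1 (by linarith [log_two_gt_d9])

theorem large_q_derivative_bound
    (q n' α : ℝ) (hn : 0 < n') (hα : 1 ≤ α) (hq : 2 * n' * α ≤ q) :
    q ^ α ≥ n' * α * (q + n') ^ (α - 1) := by
  have hq0 : 0 < q := by nlinarith
  have hexponent : n' / q * (α - 1) ≤ 1 / 2 := by
    rw [div_mul_eq_mul_div, div_le_iff₀ hq0]
    linarith
  calc n' * α * (q + n') ^ (α - 1)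
      ≤ n' * α * (exp (n' / q * (α - 1)) * q ^ (α - 1)) := by
        gcongr; exact add_rpow_le_exp_mul_rpow hq0 (by linarith) (by linarith)
    _ ≤ n' * α * (2 * q ^ (α - 1)) := by
        gcongr; exact (exp_le_exp.2 hexponent).trans exp_one_half_le_two
    _ = 2 * n' * α * q ^ (α - 1) := by ring
    _ ≤ q * q ^ (α - 1) := by gcongr
    _ = q ^ α := by rw [rpow_sub_one hq0.ne', mul_div_cancel₀ _ hq0.ne']
end

section
/- Let n, m be finite nonempty sets, q : n → ℝ≥0, λ, μ, γ, ε as in the capacity-region assumption, and suppose j* is MaxWeight-optimal. If additionally E[drift] ≤ 2Σ_i q(i)(λ(i) − μ(i,j*)) + ℓ²·|n| for some ℓ ≥ 0, then E[drift] ≤ −2ε·(min_i λ(i))·Σ_i q(i) + ℓ²·|n|. -/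
/-! MaxWeight serves at least as fast as any randomization `γ` over schedules, and by the
capacity assumption `γ` serves each class at rate `(1 + ε) λ`. Hence the service term beats the
arrival term by `ε ∑ q λ ≥ ε (min λ) ∑ q`, which turns the drift hypothesis into the bound. -/

open Finset

lemma sum_mul_le_of_sum_eq_one {ι : Type*} [Fintype ι] {w f : ι → ℝ} {M : ℝ}
    (hw : ∀ j, 0 ≤ w j) (hsum : ∑ j, w j = 1) (hf : ∀ j, f j ≤ M) :
    ∑ j, w j * f j ≤ M :=
  calc ∑ j, w j * f j ≤ ∑ j, w j * M :=
        sum_le_sum fun j _ => mul_le_mul_of_nonneg_left (hf j) (hw j)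
    _ = M := by rw [← sum_mul, hsum, one_mul]

lemma inf'_mul_sum_le_sum_mul {ι : Type*} {s : Finset ι} (hs : s.Nonempty) {q f : ι → ℝ}
    (hq : ∀ i ∈ s, 0 ≤ q i) :
    s.inf' hs f * ∑ i ∈ s, q i ≤ ∑ i ∈ s, q i * f i := by
  rw [mul_sum]
  exact sum_le_sum fun i hi => by
    rw [mul_comm]
    exact mul_le_mul_of_nonneg_left (inf'_le f hi) (hq i hi)

lemma one_add_mul_sum_le_maxWeight {n m : Type*} [Fintype n] [Fintype m]
    {q lam : n → ℝ} {μ : n → m → ℝ} {γ : m → ℝ} {ε : ℝ} (hq : ∀ i, 0 ≤ q i)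
    (hγ : ∀ j, 0 ≤ γ j) (hγsum : ∑ j, γ j = 1)
    (hcap : ∀ i, (1 + ε) * lam i ≤ ∑ j, γ j * μ i j)
    {jstar : m} (hmax : ∀ j, ∑ i, q i * μ i j ≤ ∑ i, q i * μ i jstar) :
    (1 + ε) * ∑ i, q i * lam i ≤ ∑ i, q i * μ i jstar :=
  calc (1 + ε) * ∑ i, q i * lam i = ∑ i, q i * ((1 + ε) * lam i) := by
        rw [mul_sum]; exact sum_congr rfl fun i _ => by ring
    _ ≤ ∑ i, q i * ∑ j, γ j * μ i j :=
        sum_le_sum fun i _ => mul_le_mul_of_nonneg_left (hcap i) (hq i)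
    _ = ∑ j, γ j * ∑ i, q i * μ i j := by
        simp only [mul_sum]
        rw [sum_comm]
        exact sum_congr rfl fun j _ => sum_congr rfl fun i _ => by ring
    _ ≤ ∑ i, q i * μ i jstar := sum_mul_le_of_sum_eq_one hγ hγsum hmax

theorem maxweight_drift_bound_general
    {n m : Type*} [Fintype n] [Fintype m] [Nonempty n]
    (q lam : n → ℝ) (μ : n → m → ℝ) (γ : m → ℝ) (ε ℓ : ℝ)
    (hq : ∀ i, 0 ≤ q i)
    (hγ : ∀ j, 0 ≤ γ j)
    (hγsum : ∑ j, γ j = 1) (hε : 0 < ε)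
    (hcap : ∀ i, (1 + ε) * lam i ≤ ∑ j, γ j * μ i j)
    (jstar : m) (hmax : ∀ j, ∑ i, q i * μ i j ≤ ∑ i, q i * μ i jstar)
    (drift : ℝ)
    (hdrift : drift ≤ 2 * ∑ i, q i * (lam i - μ i jstar) + ℓ ^ 2 * Fintype.card n) :
    drift ≤ -2 * ε * (Finset.univ.inf' Finset.univ_nonempty lam) * (∑ i, q i)
      + ℓ ^ 2 * Fintype.card n := by
  have hslack := one_add_mul_sum_le_maxWeight hq hγ hγsum hcap hmax
  have hmin := inf'_mul_sum_le_sum_mul univ_nonempty (f := lam) fun i _ => hq i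
  have hsplit : ∑ i, q i * (lam i - μ i jstar) = ∑ i, q i * lam i - ∑ i, q i * μ i jstar := by
    rw [← sum_sub_distrib]; exact sum_congr rfl fun i _ => by ring
  rw [hsplit] at hdrift
  linarith [mul_le_mul_of_nonneg_left hmin hε.le]

theorem maxweight_drift_bound
    {n m : Type*} [Fintype n] [Fintype m] [Nonempty n] [Nonempty m]
    (q lam : n → ℝ) (μ : n → m → ℝ) (γ : m → ℝ) (ε ℓ : ℝ)
    (hq : ∀ i, 0 ≤ q i) (hlam : ∀ i, 0 ≤ lam i)
    (hμ : ∀ i j, 0 ≤ μ i j) (hγ : ∀ j, 0 ≤ γ j)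
    (hγsum : ∑ j, γ j = 1) (hε : 0 < ε) (hℓ : 0 ≤ ℓ)
    (hcap : ∀ i, (1 + ε) * lam i ≤ ∑ j, γ j * μ i j)
    (jstar : m) (hmax : ∀ j, ∑ i, q i * μ i j ≤ ∑ i, q i * μ i jstar)
    (drift : ℝ)
    (hdrift : drift ≤ 2 * ∑ i, q i * (lam i - μ i jstar) + ℓ ^ 2 * Fintype.card n) :
    drift ≤ -2 * ε * (Finset.univ.inf' Finset.univ_nonempty lam) * (∑ i, q i)
      + ℓ ^ 2 * Fintype.card n :=
  maxweight_drift_bound_general q lam μ γ ε ℓ hq hγ hγsum hε hcap jstar hmax drift hdrift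
end
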